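/- For every integer n ≥ 1, the number of (k,j)-colored partitions of n equals the coefficient of q^n in (1/(q;q)_∞^j) · Π_{m≥1} ( Σ_{i=0}^{j} C(k−j+i−1, i) q^{i m} ); that is, Π_{m≥1} ( Σ_{i=0}^{j} C(k,i) q^{i m} / (1−q^m)^i ) = (1/(q;q)_∞^j) · Π_{m≥1} ( Σ_{i=0}^{j} C(k−j+i−1, i) q^{i m} ). -/

import Mathlib

open PowerSeries

/-- The number of (k,j)-colored partitions of n. -/
def ckj (k j n : ℕ) : ℕ :=
  ∑ P : n.Partition, ∏ s ∈ P.parts.toFinset,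
    ∑ i ∈ Finset.Icc 1 j, Nat.choose k i * Nat.choose (P.parts.count s - 1) (i - 1)

/-!
The generating function of `(k,j)`-colored partitions factors over part sizes `m`: colouring
`c` parts of size `m` amounts to choosing the `i ≤ j` colours used and a composition of `c` into
`i` positive multiplicities, which gives the factor `Σ_{i ≤ j} C(k,i) y^i/(1-y)^i` at `y = q^m`
(this is `Nat.Partition.genFun`). Multiplying this factor by `(1-y)^j` leaves the polynomial
`Σ_{i ≤ j} C(k,i) y^i (1-y)^(j-i)`, which equals `Σ_{i ≤ j} C(k-j+i-1,i) y^i` by induction on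
`j` with `k - j` fixed, using Pascal's rule.
-/

open Finset

section OneSubPow

variable {R : Type*} [CommRing R]

theorem sum_choose_succ_mul_pow_mul_one_sub_pow (k j : ℕ) (x : R) :
    ∑ i ∈ range (j + 2), ((k + 1).choose i : R) * x ^ i * (1 - x) ^ (j + 1 - i) =
      ∑ i ∈ range (j + 1), (k.choose i : R) * x ^ i * (1 - x) ^ (j - i) +
        k.choose (j + 1) * x ^ (j + 1) := by
  set L := ∑ i ∈ range (j + 1), (k.choose i : R) * x ^ i * (1 - x) ^ (j - i)
  have hshift : ∑ i ∈ range (j + 1), (k.choose (i + 1) : R) * x ^ (i + 1) * (1 - x) ^ (j - i) =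
      (1 - x) * L - (1 - x) ^ (j + 1) + k.choose (j + 1) * x ^ (j + 1) := by
    rw [sum_range_succ, mul_sum, sum_range_succ' _ j]
    simp only [Nat.sub_self, Nat.sub_zero, pow_zero, mul_one, Nat.choose_zero_right, Nat.cast_one,
      one_mul]
    rw [sum_congr rfl fun i hi => show (k.choose (i + 1) : R) * x ^ (i + 1) * (1 - x) ^ (j - i) =
        (1 - x) * ((k.choose (i + 1) : R) * x ^ (i + 1) * (1 - x) ^ (j - (i + 1))) by
      rw [show j - i = j - (i + 1) + 1 by have := mem_range.1 hi; omega, pow_succ]; ring]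
    ring
  calc _ = ∑ i ∈ range (j + 1),
          ((k.choose i : R) + k.choose (i + 1)) * x ^ (i + 1) * (1 - x) ^ (j - i) +
            (1 - x) ^ (j + 1) := by
        rw [sum_range_succ']
        simp [Nat.choose_succ_succ]
    _ = x * L + ∑ i ∈ range (j + 1), (k.choose (i + 1) : R) * x ^ (i + 1) * (1 - x) ^ (j - i)
        + (1 - x) ^ (j + 1) := by
        rw [mul_sum, ← sum_add_distrib]
        congr 1
        exact sum_congr rfl fun i _ => by ring
    _ = _ := by rw [hshift]; ring

theorem sum_add_choose_mul_pow_mul_one_sub_pow (a j : ℕ) (x : R) :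
    ∑ i ∈ range (j + 1), ((a + j).choose i : R) * x ^ i * (1 - x) ^ (j - i) =
      ∑ i ∈ range (j + 1), ((a + i - 1).choose i : R) * x ^ i := by
  induction j with
  | zero => simp
  | succ j ih =>
    rw [← add_assoc, sum_choose_succ_mul_pow_mul_one_sub_pow, ih, sum_range_succ _ (j + 1),
      show a + (j + 1) - 1 = a + j by omega]

end OneSubPow

namespace PowerSeries

section Field

variable {K : Type*} [Field K]

theorem prod_inv_distrib {ι : Type*} (s : Finset ι) (f : ι → K⟦X⟧) :
    ∏ i ∈ s, (f i)⁻¹ = (∏ i ∈ s, f i)⁻¹ := by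
  induction s using Finset.cons_induction with
  | empty => simp
  | cons a s ha ih => rw [prod_cons, prod_cons, ih, PowerSeries.mul_inv_rev, mul_comm]

theorem expand_inv (p : ℕ) (hp : p ≠ 0) (φ : K⟦X⟧) :
    expand p hp φ⁻¹ = (expand p hp φ)⁻¹ := by
  by_cases h : constantCoeff φ = 0
  · rw [inv_eq_zero.2 h, map_zero, eq_comm, inv_eq_zero, constantCoeff_expand, h]
  · rw [eq_inv_iff_mul_eq_one (by rwa [constantCoeff_expand]), ← map_mul,
      PowerSeries.inv_mul_cancel _ h, map_one]

theorem X_pow_mul_inv_one_sub_pow_succ (i : ℕ) :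
    (X : K⟦X⟧) ^ i * ((1 - X)⁻¹) ^ (i + 1) = mk fun c => (c.choose i : K) := by
  have h : ((1 - X : K⟦X⟧)⁻¹) ^ (i + 1) = (invOneSubPow K (i + 1)).val := by
    have h1 : (1 - X : K⟦X⟧)⁻¹ = (invOneSubPow K 1).val := by
      rw [inv_eq_iff_mul_eq_one (by simp), ← pow_one (1 - X), ← invOneSubPow_inv_eq_one_sub_pow]
      exact (invOneSubPow K 1).val_inv
    rw [h1, ← Units.val_pow_eq_pow_val, invOneSubPow_eq_inv_one_sub_pow,
      invOneSubPow_eq_inv_one_sub_pow, ← pow_mul, one_mul]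
  ext c
  rw [h, invOneSubPow_val_succ_eq_mk_add_choose, coeff_X_pow_mul', coeff_mk, coeff_mk]
  split_ifs with hic
  · rw [Nat.add_sub_cancel' hic]
  · rw [Nat.choose_eq_zero_of_lt (by omega), Nat.cast_zero]

end Field

open WithPiTopology

theorem one_add_tsum_smul_X_pow_eq_subst {R : Type*} [CommRing R] [TopologicalSpace R] [T2Space R]
    {i : ℕ} (hi : i ≠ 0) (a : ℕ → R) (ha : a 0 = 1) :
    1 + ∑' c, a (c + 1) • (X : R⟦X⟧) ^ (i * (c + 1)) =
      (mk a).subst ((X : R⟦X⟧) ^ i) := by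
  rw [← expand_apply i hi]
  ext d
  rw [coeff_expand, map_add,
    (Nat.Partition.summable_genFun_term' (fun _ c => a c) hi).map_tsum _ (continuous_coeff _ _)]
  simp only [map_smul, coeff_X_pow, coeff_one, smul_eq_mul, mul_ite, mul_one, mul_zero]
  by_cases hd : i ∣ d
  · obtain ⟨e, rfl⟩ := hd
    rw [if_pos (dvd_mul_right i e), Nat.mul_div_cancel_left _ (Nat.pos_of_ne_zero hi), coeff_mk]
    rcases e with _ | e
    · simp [hi, ha]
    · rw [tsum_eq_single e fun c hc => if_neg (by simpa [hi] using hc.symm)]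
      simp [hi]
  · have hd0 : d ≠ 0 := by rintro rfl; exact hd (dvd_zero i)
    rw [if_neg hd, if_neg hd0, zero_add]
    convert tsum_zero with c
    exact if_neg fun h => hd ⟨c + 1, h⟩

end PowerSeries

open scoped PowerSeries.WithPiTopology in
theorem Nat.Partition.coeff_prod_subst_X_pow {R : Type*} [CommRing R] (f : ℕ → ℕ → R)
    (hf : ∀ i, f i 0 = 1) (n : ℕ) :
    coeff n (∏ i ∈ Icc 1 n, (PowerSeries.mk (f i)).subst ((X : R⟦X⟧) ^ i)) =
      ∑ p : n.Partition, p.parts.toFinsupp.prod f := by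
  -- `hasProd_genFun` needs a Hausdorff topology on `R`; any one will do.
  let : TopologicalSpace R := ⊥
  have : DiscreteTopology R := ⟨rfl⟩
  -- Dropping the parts larger than `n` makes the product of `hasProd_genFun` finite and does
  -- not change the coefficient of `X ^ n`.
  set g : ℕ → ℕ → R := fun i c => if i ≤ n then f i c else 0
  have hfactor : ∀ i, 1 + ∑' c, g (i + 1) (c + 1) • (X : R⟦X⟧) ^ ((i + 1) * (c + 1)) =
      if i ∈ range n then (PowerSeries.mk (f (i + 1))).subst ((X : R⟦X⟧) ^ (i + 1))
      else 1 := by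
    intro i
    split_ifs with hi
    · have hg : g (i + 1) = f (i + 1) := funext fun c => if_pos (mem_range.1 hi)
      rw [hg, one_add_tsum_smul_X_pow_eq_subst i.succ_ne_zero _ (hf _)]
    · simp [g, mem_range.not.1 hi]
  have hgenFun : Nat.Partition.genFun g =
      ∏ i ∈ range n, (PowerSeries.mk (f (i + 1))).subst ((X : R⟦X⟧) ^ (i + 1)) := by
    refine (Nat.Partition.hasProd_genFun g).unique ?_
    simp_rw [hfactor]
    rw [← prod_congr rfl fun i hi => if_pos hi]
    exact hasProd_prod_of_ne_finset_one fun i hi => if_neg hi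
  rw [← Ico_add_one_right_eq_Icc, prod_Ico_eq_prod_range, Nat.add_sub_cancel]
  simp_rw [add_comm 1, ← hgenFun, Nat.Partition.coeff_genFun]
  refine sum_congr rfl fun p _ => Finsupp.prod_congr fun i hi => if_pos ?_
  exact p.le_of_mem_parts (by simpa using hi)

def colorWeight (k j : ℕ) : ℕ → ℕ
  | 0 => 1
  | c + 1 => ∑ i ∈ Icc 1 j, k.choose i * c.choose (i - 1)

theorem ckj_eq_sum_prod_colorWeight (k j n : ℕ) :
    ckj k j n = ∑ p : n.Partition, p.parts.toFinsupp.prod fun _ c => colorWeight k j c := by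
  refine sum_congr rfl fun p _ => prod_congr (by simp) fun s hs => ?_
  obtain ⟨c, hc⟩ := Nat.exists_eq_add_one_of_ne_zero
    (Multiset.count_ne_zero.2 (Multiset.mem_toFinset.1 hs))
  simp [hc, colorWeight]

noncomputable def colorFactor (K : Type*) [Field K] (k j m : ℕ) : K⟦X⟧ :=
  ∑ i ∈ range (j + 1), (k.choose i : K) • ((X : K⟦X⟧) ^ (i * m) * ((1 - X ^ m)⁻¹) ^ i)

section ColorFactor

variable {K : Type*} [Field K] {k j m : ℕ}

variable (K k j) in
theorem colorFactor_one_eq_mk : colorFactor K k j 1 = mk fun c => (colorWeight k j c : K) := by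
  have hterm (i : ℕ) : (X : K⟦X⟧) ^ (i + 1) * ((1 - X)⁻¹) ^ (i + 1) =
      X * mk fun c => (c.choose i : K) := by
    rw [pow_succ', mul_assoc, X_pow_mul_inv_one_sub_pow_succ]
  simp only [colorFactor, mul_one, pow_one]
  rw [sum_range_succ']
  simp_rw [hterm]
  ext (_ | c)
  · simp [colorWeight]
  · simp [colorWeight, ← Ico_add_one_right_eq_Icc, sum_Ico_eq_sum_range, add_comm 1]

theorem colorFactor_one_eq_inv_pow_mul (hjk : j ≤ k) :
    colorFactor K k j 1 =
      ((1 - X)⁻¹) ^ j *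
        ∑ i ∈ range (j + 1), ((k - j + i - 1).choose i : K) • (X : K⟦X⟧) ^ i := by
  obtain ⟨a, rfl⟩ : ∃ a, k = a + j := ⟨k - j, by omega⟩
  have hu : (1 - X : K⟦X⟧) * (1 - X)⁻¹ = 1 := PowerSeries.mul_inv_cancel _ (by simp)
  have hterm : ∀ i ∈ range (j + 1), (1 - X : K⟦X⟧) ^ j *
      (((a + j).choose i : K) • ((X : K⟦X⟧) ^ i * ((1 - X)⁻¹) ^ i)) =
        ((a + j).choose i : K⟦X⟧) * X ^ i * (1 - X) ^ (j - i) := by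
    intro i hi
    have hsplit : (1 - X : K⟦X⟧) ^ j = (1 - X) ^ (j - i) * (1 - X) ^ i := by
      rw [← pow_add, Nat.sub_add_cancel (mem_range_succ_iff.1 hi)]
    calc _ = ((a + j).choose i : K⟦X⟧) * X ^ i * (1 - X) ^ (j - i) *
            ((1 - X) ^ i * ((1 - X)⁻¹) ^ i) := by
          rw [hsplit, Nat.cast_smul_eq_nsmul, nsmul_eq_mul]; ring
      _ = _ := by rw [← mul_pow, hu, one_pow, mul_one]
  apply mul_left_cancel₀ (pow_ne_zero j (left_ne_zero_of_mul_eq_one hu))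
  simp only [colorFactor, mul_one, pow_one]
  rw [← mul_assoc, ← mul_pow, hu, one_pow, one_mul, mul_sum, sum_congr rfl hterm,
    sum_add_choose_mul_pow_mul_one_sub_pow, Nat.add_sub_cancel]
  simp [Nat.cast_smul_eq_nsmul]

theorem colorFactor_eq_expand (hm : m ≠ 0) :
    colorFactor K k j m = expand m hm (colorFactor K k j 1) := by
  simp [colorFactor, expand_inv, ← pow_mul, mul_comm m]

variable (K k j) in
theorem colorFactor_eq_subst (hm : m ≠ 0) :
    colorFactor K k j m = (mk fun c => (colorWeight k j c : K)).subst ((X : K⟦X⟧) ^ m) := by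
  rw [colorFactor_eq_expand hm, colorFactor_one_eq_mk, expand_apply]

theorem colorFactor_eq_inv_pow_mul (hjk : j ≤ k) (hm : m ≠ 0) :
    colorFactor K k j m = ((1 - X ^ m)⁻¹) ^ j *
      ∑ i ∈ range (j + 1), ((k - j + i - 1).choose i : K) • (X : K⟦X⟧) ^ (i * m) := by
  rw [colorFactor_eq_expand hm, colorFactor_one_eq_inv_pow_mul hjk]
  simp [expand_inv, ← pow_mul, mul_comm m]

theorem prod_colorFactor_eq (hjk : j ≤ k) (s : Finset ℕ) (hs : 0 ∉ s) :
    ∏ m ∈ s, colorFactor K k j m = ((∏ m ∈ s, (1 - (X : K⟦X⟧) ^ m))⁻¹) ^ j *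
      ∏ m ∈ s, ∑ i ∈ range (j + 1),
        ((k - j + i - 1).choose i : K) • (X : K⟦X⟧) ^ (i * m) := by
  rw [prod_congr rfl fun m hm => colorFactor_eq_inv_pow_mul hjk (ne_of_mem_of_not_mem hm hs),
    prod_mul_distrib, prod_pow, PowerSeries.prod_inv_distrib]

variable (K k j) in
theorem coeff_prod_colorFactor (n : ℕ) :
    coeff n (∏ m ∈ Icc 1 n, colorFactor K k j m) = ckj k j n := by
  rw [prod_congr rfl fun m hm =>
      colorFactor_eq_subst K k j (Nat.one_le_iff_ne_zero.1 (mem_Icc.1 hm).1),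
    Nat.Partition.coeff_prod_subst_X_pow _ fun _ => Nat.cast_one, ckj_eq_sum_prod_colorWeight]
  push_cast
  rfl

end ColorFactor

theorem ckj_gen_fun_general (k j : ℕ) (hjk : j ≤ k) (n : ℕ) :
    (ckj k j n : ℚ) =
      PowerSeries.coeff (R := ℚ) n
        (((∏ m ∈ Finset.Icc 1 n, (1 - (PowerSeries.X : PowerSeries ℚ) ^ m))⁻¹) ^ j *
          ∏ m ∈ Finset.Icc 1 n, ∑ i ∈ Finset.range (j + 1),
            ((k - j + i - 1).choose i : ℚ) • (PowerSeries.X : PowerSeries ℚ) ^ (i * m)) ∧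
    PowerSeries.coeff (R := ℚ) n
        (∏ m ∈ Finset.Icc 1 n, ∑ i ∈ Finset.range (j + 1),
          (k.choose i : ℚ) •
            ((PowerSeries.X : PowerSeries ℚ) ^ (i * m) *
              ((1 - (PowerSeries.X : PowerSeries ℚ) ^ m)⁻¹) ^ i)) =
      PowerSeries.coeff (R := ℚ) n
        (((∏ m ∈ Finset.Icc 1 n, (1 - (PowerSeries.X : PowerSeries ℚ) ^ m))⁻¹) ^ j *
          ∏ m ∈ Finset.Icc 1 n, ∑ i ∈ Finset.range (j + 1),
            ((k - j + i - 1).choose i : ℚ) • (PowerSeries.X : PowerSeries ℚ) ^ (i * m)) := by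
  have hprod := prod_colorFactor_eq (K := ℚ) hjk (Icc 1 n) (by simp)
  have hckj := coeff_prod_colorFactor ℚ k j n
  simp only [colorFactor] at hprod hckj
  rw [← hprod]
  exact ⟨hckj.symm, rfl⟩

/-- For `k ≥ j ≥ 1` and `n ≥ 1`, `c_{k,j}(n)` is the coefficient of `qⁿ` in
`(1/(q;q)_∞^j) · Π_{m≥1} ( Σ_{i=0}^{j} C(k−j+i−1, i) q^{i m} )`; that is,
`Π_{m≥1} ( Σ_{i=0}^{j} C(k,i) q^{i m}/(1−q^m)^i )` equals that product.  Since factors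
with `m > n` do not affect the coefficient of `qⁿ`, the infinite products over `m` are
truncated at `m = n`. -/
theorem ckj_gen_fun (k j : ℕ) (hj : 1 ≤ j) (hjk : j ≤ k) (n : ℕ) (hn : 1 ≤ n) :
    (ckj k j n : ℚ) =
      PowerSeries.coeff (R := ℚ) n
        (((∏ m ∈ Finset.Icc 1 n, (1 - (PowerSeries.X : PowerSeries ℚ) ^ m))⁻¹) ^ j *
          ∏ m ∈ Finset.Icc 1 n, ∑ i ∈ Finset.range (j + 1),
            ((k - j + i - 1).choose i : ℚ) • (PowerSeries.X : PowerSeries ℚ) ^ (i * m)) ∧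
    PowerSeries.coeff (R := ℚ) n
        (∏ m ∈ Finset.Icc 1 n, ∑ i ∈ Finset.range (j + 1),
          (k.choose i : ℚ) •
            ((PowerSeries.X : PowerSeries ℚ) ^ (i * m) *
              ((1 - (PowerSeries.X : PowerSeries ℚ) ^ m)⁻¹) ^ i)) =
      PowerSeries.coeff (R := ℚ) n
        (((∏ m ∈ Finset.Icc 1 n, (1 - (PowerSeries.X : PowerSeries ℚ) ^ m))⁻¹) ^ j *
          ∏ m ∈ Finset.Icc 1 n, ∑ i ∈ Finset.range (j + 1),
            ((k - j + i - 1).choose i : ℚ) • (PowerSeries.X : PowerSeries ℚ) ^ (i * m)) :=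
  ckj_gen_fun_general k j hjk n
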